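/- Let $B$ be a standard $d$-dimensional Brownian motion, $\epsilon > 0$, $T_0 = 0$, $T_n = \inf\{t > T_{n-1} : \|B(t) - B(T_{n-1})\|_\infty = \epsilon\}$, $A^{j}(t) = \sum_{n=1}^{\infty} (B^j(T_n) - B^j(T_{n-1})) \mathbf{1}_{\{T_n \le t\}}$, and let $\mathcal{F}^A_t$ denote the (completed) natural filtration of $A = (A^1,\ldots,A^d)$. Then for every $n \ge 0$ and every $t \ge 0$, the trace $\sigma$-algebras agree on the event $\{T_n \le t < T_{n+1}\}$: $\mathcal{F}^A_t \cap \{T_n \le t < T_{n+1}\} = \mathcal{F}^A_{T_n} \cap \{T_n \le t < T_{n+1}\}$, where $\mathcal{F}^A_{T_n}$ is the stopped $\sigma$-algebra at the stopping time $T_n$. -/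

import Mathlib

open MeasureTheory ProbabilityTheory Filter Topology

/-- `B` is a standard `d`-dimensional Brownian motion under the probability measure `P`:
it starts at `0`, has a.s. continuous paths, independent increments, and every increment
`B t - B s` (for `0 ≤ s ≤ t`) is a vector of `d` independent centered Gaussians of
variance `t - s`. -/
structure IsBrownianMotion {Ω : Type*} [MeasurableSpace Ω] {d : ℕ}
    (P : Measure Ω) (B : ℝ → Ω → (Fin d → ℝ)) : Prop where
  measurable : ∀ t : ℝ, Measurable (B t)
  start : ∀ᵐ ω ∂P, B 0 ω = 0
  cont : ∀ᵐ ω ∂P, Continuous fun t : ℝ => B t ω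
  indep_increments : ∀ (n : ℕ) (t : ℕ → ℝ), Monotone t →
    iIndepFun
      (fun i : Fin n => fun ω => B (t (i.1 + 1)) ω - B (t i.1) ω) P
  gaussian_increments : ∀ s t : ℝ, 0 ≤ s → s ≤ t →
    P.map (fun ω => B t ω - B s ω)
      = Measure.pi fun _ : Fin d => gaussianReal 0 (t - s).toNNReal

/-- The hitting times `T_0 = 0`,
`T_n = inf { t > T_{n-1} | ‖B t - B (T_{n-1})‖_∞ = ε }`.  The norm on `Fin d → ℝ`
is the sup norm. -/
noncomputable def hitTimes {Ω : Type*} {d : ℕ} (B : ℝ → Ω → (Fin d → ℝ)) (ε : ℝ)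
    (ω : Ω) : ℕ → ℝ
  | 0 => 0
  | n + 1 => sInf {t : ℝ | hitTimes B ε ω n < t ∧ ‖B t ω - B (hitTimes B ε ω n) ω‖ = ε}

/-- `τ^j = inf { t > 0 | |W^j t| = 1 }`, the exit time of the `j`-th coordinate
from `[-1, 1]`. -/
noncomputable def exitTime {Ω : Type*} {d : ℕ} (W : ℝ → Ω → (Fin d → ℝ)) (j : Fin d)
    (ω : Ω) : ℝ :=
  sInf {t : ℝ | 0 < t ∧ |W t ω j| = 1}

/-- `χ_d = E[min (τ^1, …, τ^d)]`. -/
noncomputable def chi {Ω : Type*} [MeasurableSpace Ω] {d : ℕ} (P : Measure Ω)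
    (W : ℝ → Ω → (Fin d → ℝ)) : ℝ :=
  ∫ ω, ⨅ j : Fin d, exitTime W j ω ∂P

/-- The skeleton (pure-jump discretization) of the `j`-th coordinate of the
Brownian motion: `A^j(t) = ∑_{n ≥ 1} (B^j(T_n) - B^j(T_{n-1})) 1_{T_n ≤ t}`. -/
noncomputable def skeleton {Ω : Type*} {d : ℕ} (B : ℝ → Ω → (Fin d → ℝ)) (ε : ℝ)
    (j : Fin d) (t : ℝ) (ω : Ω) : ℝ :=
  ∑' n : ℕ, if hitTimes B ε ω (n + 1) ≤ t
    then B (hitTimes B ε ω (n + 1)) ω j - B (hitTimes B ε ω n) ω j else 0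

/-- The completed natural filtration of a process `X`: at time `t`, the σ-algebra
generated by `X s`, `s ≤ t`, augmented by the `P`-null sets. -/
def completedNatural {Ω α : Type*} [MeasurableSpace Ω] [MeasurableSpace α]
    (P : Measure Ω) (X : ℝ → Ω → α) (t : ℝ) : MeasurableSpace Ω :=
  (⨆ s ∈ Set.Iic t, MeasurableSpace.comap (X s) inferInstance) ⊔
    MeasurableSpace.generateFrom {N : Set Ω | P N = 0}

/-! Off a null set the Brownian path is continuous and unbounded on `[0, ∞)`, so the hitting
times are finite and strictly increasing and the skeleton equals `B (T m) - B 0` on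
`[T m, T (m+1))`. On such paths both `{T k ≤ u}` and the value of `A` at `T k` can be read off
from `A` sampled at rational times and at `u`, so `T n` is a stopping time of the completed
filtration. A generator `{A s ∈ C}` with `s ≤ t` agrees on `{T n ≤ t < T (n+1)}` with
`{A (min s (T n)) ∈ C}`, which is `T n`-stopped measurable; as both σ-algebras contain the null
sets, this is enough. -/

open Set

section StoppedMeasurableSpace

variable {Ω ι : Type*} [LE ι]

def stoppedMeasurableSpace (F : ι → MeasurableSpace Ω) (τ : Ω → ι)
    (hτ : ∀ i, MeasurableSet[F i] {ω | τ ω ≤ i}) : MeasurableSpace Ω where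
  MeasurableSet' S := ∀ i, MeasurableSet[F i] (S ∩ {ω | τ ω ≤ i})
  measurableSet_empty i := by simp
  measurableSet_compl S hS i := by
    rw [← sdiff_eq_compl_inter, ← sdiff_inter_self_eq_sdiff]
    exact (hτ i).diff (hS i)
  measurableSet_iUnion f hf i := by
    rw [iUnion_inter]
    exact .iUnion fun j => hf j i

theorem measurableSet_stoppedMeasurableSpace_of_null {F : ι → MeasurableSpace Ω} {τ : Ω → ι}
    (hτ : ∀ i, MeasurableSet[F i] {ω | τ ω ≤ i}) [MeasurableSpace Ω] {P : Measure Ω}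
    (hF : ∀ i N, P N = 0 → MeasurableSet[F i] N) {N : Set Ω} (hN : P N = 0) :
    MeasurableSet[stoppedMeasurableSpace F τ hτ] N :=
  fun i => hF i _ (measure_mono_null inter_subset_left hN)

theorem image_inter_stoppedMeasurableSpace_subset {F : ι → MeasurableSpace Ω} {τ : Ω → ι}
    (hτ : ∀ i, MeasurableSet[F i] {ω | τ ω ≤ i}) {i : ι} {E : Set Ω}
    (hE : E ⊆ {ω | τ ω ≤ i}) :
    (· ∩ E) '' {S | MeasurableSet[stoppedMeasurableSpace F τ hτ] S} ⊆
      (· ∩ E) '' {S | MeasurableSet[F i] S} := by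
  rintro _ ⟨S, hS, rfl⟩
  exact ⟨S ∩ {ω | τ ω ≤ i}, hS i, by simp only [inter_assoc, inter_eq_right.mpr hE]⟩

end StoppedMeasurableSpace

section Trace

variable {Ω : Type*} {m m₀ : MeasurableSpace Ω} {P : Measure Ω}

theorem MeasurableSet.of_ae_eq_of_null (hm : ∀ N, P N = 0 → MeasurableSet[m] N)
    {S T : Set Ω} (hT : MeasurableSet[m] T) (h : S =ᵐ[P] T) : MeasurableSet[m] S := by
  obtain ⟨hST, hTS⟩ := ae_eq_set.mp h
  rw [show S = (T ∪ S \ T) \ (T \ S) by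
    ext ω; by_cases ω ∈ S <;> by_cases ω ∈ T <;> simp_all]
  exact (hT.union (hm _ hST)).diff (hm _ hTS)

theorem measurableSet_map_comap_of_ae_mem_iff (hm : ∀ N, P N = 0 → MeasurableSet[m] N)
    {E S T : Set Ω} (hT : MeasurableSet[m] T) (h : ∀ᵐ ω ∂P, ω ∈ E → (ω ∈ S ↔ ω ∈ T)) :
    MeasurableSet[(m.comap ((↑) : E → Ω)).map (↑)] S := by
  refine ⟨S ∩ E ∪ T \ E, hT.of_ae_eq_of_null hm (eventuallyEq_set.mpr ?_), ?_⟩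
  · filter_upwards [h] with ω hω
    by_cases hE : ω ∈ E <;> simp_all
  · ext
    simp

theorem image_inter_subset_of_le_map_comap {m₁ m₂ : MeasurableSpace Ω} {E : Set Ω}
    (h : m₁ ≤ (m₂.comap ((↑) : E → Ω)).map (↑)) :
    (· ∩ E) '' {S | MeasurableSet[m₁] S} ⊆ (· ∩ E) '' {S | MeasurableSet[m₂] S} := by
  rintro _ ⟨S, hS, rfl⟩
  obtain ⟨T, hT, hTS⟩ := h S hS
  exact ⟨T, hT, by simpa only [inter_comm E] using Subtype.preimage_coe_eq_preimage_coe_iff.mp hTS⟩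

end Trace

section CompletedNatural

variable {Ω α : Type*} {m : MeasurableSpace Ω} [MeasurableSpace Ω] [MeasurableSpace α]
  (P : Measure Ω) (X : ℝ → Ω → α)

theorem completedNatural_mono : Monotone (completedNatural P X) := fun _ _ hst =>
  sup_le_sup_right (biSup_mono fun _ hs => (mem_Iic.mp hs).trans hst) _

theorem measurable_completedNatural {s t : ℝ} (hst : s ≤ t) :
    Measurable[completedNatural P X t] (X s) :=
  measurable_iff_comap_le.mpr <| (le_biSup (fun s => MeasurableSpace.comap (X s) _)
    (mem_Iic.mpr hst)).trans le_sup_left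

theorem measurableSet_completedNatural_of_null (t : ℝ) {N : Set Ω} (hN : P N = 0) :
    MeasurableSet[completedNatural P X t] N :=
  le_sup_right (α := MeasurableSpace Ω) _ (MeasurableSpace.measurableSet_generateFrom hN)

theorem completedNatural_le {t : ℝ} (hX : ∀ s ≤ t, Measurable[m] (X s))
    (hm : ∀ N, P N = 0 → MeasurableSet[m] N) : completedNatural P X t ≤ m :=
  sup_le (iSup₂_le fun s hs => measurable_iff_comap_le.mp (hX s hs))
    (MeasurableSpace.generateFrom_le hm)

end CompletedNatural

theorem Continuous.csInf_mem_setOf_lt_and_eq {g : ℝ → ℝ} (hg : Continuous g) {u c : ℝ}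
    (hu : g u ≠ c) (hc : ∃ t, u < t ∧ g t = c) :
    sInf {t | u < t ∧ g t = c} ∈ {t | u < t ∧ g t = c} := by
  have hset : {t | u < t ∧ g t = c} = Ici u ∩ g ⁻¹' {c} := by
    ext t
    refine ⟨fun ht => ⟨ht.1.le, ht.2⟩, fun ht => ⟨ht.1.lt_of_ne ?_, ht.2⟩⟩
    rintro rfl
    exact hu ht.2
  obtain ⟨t, hut, hgt⟩ := hc
  rw [hset]
  exact (isClosed_Ici.inter (isClosed_singleton.preimage hg)).csInf_mem
    ⟨t, hut.le, hgt⟩ ⟨u, fun t ht => ht.1⟩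

section Path

variable {Ω : Type*} {d : ℕ} {B : ℝ → Ω → (Fin d → ℝ)} {ε : ℝ} {ω : Ω}

structure ContinuousUnboundedPath (B : ℝ → Ω → (Fin d → ℝ)) (ω : Ω) : Prop where
  continuous : Continuous fun s => B s ω
  unbounded : ∀ M : ℕ, ∃ s, 0 ≤ s ∧ (M : ℝ) ≤ ‖B s ω - B 0 ω‖

def sampleTimes (u : ℝ) : Set ℝ := insert u (range ((↑) : ℚ → ℝ))

theorem countable_sampleTimes (u : ℝ) : (sampleTimes u).Countable :=
  (countable_range _).insert u

noncomputable def skeletonProcess (B : ℝ → Ω → (Fin d → ℝ)) (ε : ℝ) (r : ℝ) (ω : Ω) : Fin d → ℝ :=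
  fun j => skeleton B ε j r ω

namespace ContinuousUnboundedPath

variable (hB : ContinuousUnboundedPath B ω) (hε : 0 < ε)
include hB hε

theorem exists_lt_norm_sub_eq (u : ℝ) : ∃ s, u < s ∧ ‖B s ω - B u ω‖ = ε := by
  obtain ⟨K, hK⟩ := isCompact_Icc.exists_bound_of_continuousOn (s := Icc 0 u)
    (f := fun s => B s ω - B 0 ω) (hB.continuous.sub continuous_const).continuousOn
  obtain ⟨M, hM⟩ := exists_nat_ge (max K 0 + ε + ‖B u ω - B 0 ω‖)
  obtain ⟨s, hs0, hsM⟩ := hB.unbounded M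
  have hus : u < s := lt_of_not_ge fun hsu => by
    linarith [hK s ⟨hs0, hsu⟩, norm_nonneg (B u ω - B 0 ω), le_max_left K 0]
  have hεs : ε ≤ ‖B s ω - B u ω‖ := by
    have := norm_sub_norm_le (B s ω - B 0 ω) (B u ω - B 0 ω)
    rw [sub_sub_sub_cancel_right] at this
    linarith [le_max_right K 0]
  obtain ⟨x, hx, hxε⟩ := intermediate_value_Icc hus.le
    (continuous_norm.comp (hB.continuous.sub continuous_const)).continuousOn
    (⟨by simpa using hε.le, hεs⟩ : ε ∈ Icc ‖B u ω - B u ω‖ ‖B s ω - B u ω‖)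
  refine ⟨x, hx.1.lt_of_ne ?_, hxε⟩
  rintro rfl
  simp [hε.ne] at hxε

theorem hitTimes_succ_mem (k : ℕ) : hitTimes B ε ω (k + 1) ∈
    {t | hitTimes B ε ω k < t ∧ ‖B t ω - B (hitTimes B ε ω k) ω‖ = ε} :=
  (continuous_norm.comp (hB.continuous.sub continuous_const)).csInf_mem_setOf_lt_and_eq
    (by simpa using hε.ne) (hB.exists_lt_norm_sub_eq hε _)

theorem strictMono_hitTimes : StrictMono (hitTimes B ε ω) :=
  strictMono_nat_of_lt_succ fun k => (hB.hitTimes_succ_mem hε k).1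

theorem skeletonProcess_eq {m : ℕ} {u : ℝ} (hm : hitTimes B ε ω m ≤ u)
    (hu : u < hitTimes B ε ω (m + 1)) :
    skeletonProcess B ε u ω = B (hitTimes B ε ω m) ω - B 0 ω := by
  have hjump : ∀ n, hitTimes B ε ω (n + 1) ≤ u ↔ n < m := fun n =>
    ⟨fun h => lt_of_not_ge fun hmn =>
      (hu.trans_le ((hB.strictMono_hitTimes hε).monotone (by omega))).not_ge h,
    fun h => ((hB.strictMono_hitTimes hε).monotone h).trans hm⟩
  funext j
  simp only [skeletonProcess, skeleton, hjump]
  rw [tsum_eq_sum (s := Finset.range m) fun n hn => if_neg (by simpa using hn),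
    Finset.sum_ite_of_true fun n hn => Finset.mem_range.mp hn,
    Finset.sum_range_sub (fun n => B (hitTimes B ε ω n) ω j)]
  rfl

theorem skeletonProcess_eq_hitTimes {k : ℕ} {u : ℝ} (hk : hitTimes B ε ω k ≤ u)
    (hu : u < hitTimes B ε ω (k + 1)) :
    skeletonProcess B ε u ω = skeletonProcess B ε (hitTimes B ε ω k) ω := by
  rw [hB.skeletonProcess_eq hε hk hu, hB.skeletonProcess_eq hε le_rfl (hB.hitTimes_succ_mem hε k).1]

theorem exists_mem_sampleTimes {k : ℕ} {u : ℝ} (hk : hitTimes B ε ω k ≤ u) :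
    ∃ x ∈ sampleTimes u, x ≤ u ∧ hitTimes B ε ω k ≤ x ∧ x < hitTimes B ε ω (k + 1) := by
  by_cases hu : hitTimes B ε ω (k + 1) ≤ u
  · obtain ⟨q, hkq, hqk⟩ := exists_rat_btwn (hB.hitTimes_succ_mem hε k).1
    exact ⟨q, mem_insert_of_mem _ ⟨q, rfl⟩, hqk.le.trans hu, hkq.le, hqk⟩
  · exact ⟨u, mem_insert _ _, le_rfl, hk, not_le.mp hu⟩

theorem hitTimes_succ_le_iff (k : ℕ) (u : ℝ) :
    hitTimes B ε ω (k + 1) ≤ u ↔ ∃ q : ℚ, ∃ p ∈ sampleTimes u, (q : ℝ) < p ∧ p ≤ u ∧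
      hitTimes B ε ω k ≤ q ∧ skeletonProcess B ε q ω ≠ skeletonProcess B ε p ω := by
  constructor
  · intro hu
    obtain ⟨q, hkq, hqk⟩ := exists_rat_btwn (hB.hitTimes_succ_mem hε k).1
    obtain ⟨p, hp, hpu, hkp, hpk⟩ := hB.exists_mem_sampleTimes hε hu
    refine ⟨q, p, hp, hqk.trans_le hkp, hpu, hkq.le, ?_⟩
    rw [hB.skeletonProcess_eq hε hkq.le hqk, hB.skeletonProcess_eq hε hkp hpk, Ne, sub_left_inj]
    intro h
    simpa [h, hε.ne] using (hB.hitTimes_succ_mem hε k).2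
  · rintro ⟨q, p, -, hqp, hpu, hkq, hne⟩
    by_contra! hu
    exact hne <| by rw [hB.skeletonProcess_eq_hitTimes hε hkq (by linarith),
      hB.skeletonProcess_eq_hitTimes hε (hkq.trans hqp.le) (hpu.trans_lt hu)]

theorem hitTimes_le_and_mem_iff (k : ℕ) (u : ℝ) (C : Set (Fin d → ℝ)) :
    hitTimes B ε ω k ≤ u ∧ skeletonProcess B ε (hitTimes B ε ω k) ω ∈ C ↔
      ∃ x ∈ sampleTimes u, x ≤ u ∧ hitTimes B ε ω k ≤ x ∧ ¬ hitTimes B ε ω (k + 1) ≤ x ∧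
        skeletonProcess B ε x ω ∈ C := by
  constructor
  · rintro ⟨hk, hC⟩
    obtain ⟨x, hx, hxu, hkx, hxk⟩ := hB.exists_mem_sampleTimes hε hk
    exact ⟨x, hx, hxu, hkx, not_le.mpr hxk, by rwa [hB.skeletonProcess_eq_hitTimes hε hkx hxk]⟩
  · rintro ⟨x, -, hxu, hkx, hxk, hC⟩
    exact ⟨hkx.trans hxu, by rwa [← hB.skeletonProcess_eq_hitTimes hε hkx (not_le.mp hxk)]⟩

theorem skeletonProcess_min_hitTimes {n : ℕ} {s t : ℝ} (hst : s ≤ t)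
    (ht : t < hitTimes B ε ω (n + 1)) :
    skeletonProcess B ε (min s (hitTimes B ε ω n)) ω = skeletonProcess B ε s ω := by
  rcases le_total s (hitTimes B ε ω n) with hs | hs
  · rw [min_eq_left hs]
  · rw [min_eq_right hs, hB.skeletonProcess_eq_hitTimes hε hs (hst.trans_lt ht)]

end ContinuousUnboundedPath

end Path

section SkeletonFiltration

variable {Ω : Type*} [MeasurableSpace Ω] (P : Measure Ω) {d : ℕ} {B : ℝ → Ω → (Fin d → ℝ)}
  {ε : ℝ}

local notation "𝓕" => completedNatural P (skeletonProcess B ε)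

variable {P} (hgood : ∀ᵐ ω ∂P, ContinuousUnboundedPath B ω) (hε : 0 < ε)
include hgood hε

theorem measurableSet_hitTimes_le (k : ℕ) (u : ℝ) :
    MeasurableSet[𝓕 u] {ω | hitTimes B ε ω k ≤ u} := by
  induction k generalizing u with
  | zero => exact MeasurableSet.const ((0 : ℝ) ≤ u)
  | succ k ih =>
    refine MeasurableSet.of_ae_eq_of_null (fun _ => measurableSet_completedNatural_of_null P _ u)
      (T := ⋃ q : ℚ, ⋃ p ∈ sampleTimes u, ⋃ (_ : (q : ℝ) < p ∧ p ≤ u),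
        {ω | hitTimes B ε ω k ≤ q} ∩ {ω | skeletonProcess B ε q ω = skeletonProcess B ε p ω}ᶜ)
      ?_ (eventuallyEq_set.mpr ?_)
    · refine .iUnion fun q => .biUnion (countable_sampleTimes u) fun p _ => .iUnion fun hqp => ?_
      exact (completedNatural_mono P _ (hqp.1.le.trans hqp.2) _ (ih q)).inter
        (measurableSet_eq_fun (measurable_completedNatural P _ (hqp.1.le.trans hqp.2))
          (measurable_completedNatural P _ hqp.2)).compl
    · filter_upwards [hgood] with ω hω
      simp only [mem_iUnion, mem_inter_iff, mem_compl_iff, exists_prop, and_assoc]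
      exact hω.hitTimes_succ_le_iff hε k u

theorem measurableSet_hitTimes_le_inter_preimage (k : ℕ) (u : ℝ) {C : Set (Fin d → ℝ)}
    (hC : MeasurableSet C) :
    MeasurableSet[𝓕 u] ({ω | hitTimes B ε ω k ≤ u} ∩
      {ω | skeletonProcess B ε (hitTimes B ε ω k) ω ∈ C}) := by
  refine MeasurableSet.of_ae_eq_of_null (fun _ => measurableSet_completedNatural_of_null P _ u)
    (T := ⋃ x ∈ sampleTimes u, ⋃ (_ : x ≤ u),
      ({ω | hitTimes B ε ω k ≤ x} \ {ω | hitTimes B ε ω (k + 1) ≤ x}) ∩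
        skeletonProcess B ε x ⁻¹' C)
    ?_ (eventuallyEq_set.mpr ?_)
  · refine .biUnion (countable_sampleTimes u) fun x _ => .iUnion fun hxu => ?_
    exact (completedNatural_mono P _ hxu _ ((measurableSet_hitTimes_le hgood hε k x).diff
      (measurableSet_hitTimes_le hgood hε (k + 1) x))).inter
      (measurable_completedNatural P _ hxu hC)
  · filter_upwards [hgood] with ω hω
    simp only [mem_iUnion, mem_inter_iff, Set.mem_sdiff, mem_ofPred_eq, mem_preimage, exists_prop,
      and_assoc]
    exact hω.hitTimes_le_and_mem_iff hε k u C

local notation "𝓖" n => stoppedMeasurableSpace 𝓕 (fun ω => hitTimes B ε ω n)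
  (measurableSet_hitTimes_le hgood hε n)

theorem measurableSet_stopped_preimage_min (n : ℕ) (s : ℝ) {C : Set (Fin d → ℝ)}
    (hC : MeasurableSet C) :
    MeasurableSet[𝓖 n] {ω | skeletonProcess B ε (min s (hitTimes B ε ω n)) ω ∈ C} := by
  intro r
  rcases le_or_gt s r with hsr | hrs
  · refine MeasurableSet.inter ?_ (measurableSet_hitTimes_le hgood hε n r)
    have hsplit : {ω | skeletonProcess B ε (min s (hitTimes B ε ω n)) ω ∈ C} =
        ({ω | hitTimes B ε ω n ≤ s} ∩ {ω | skeletonProcess B ε (hitTimes B ε ω n) ω ∈ C}) ∪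
          ({ω | hitTimes B ε ω n ≤ s}ᶜ ∩ skeletonProcess B ε s ⁻¹' C) := by
      ext ω
      by_cases h : hitTimes B ε ω n ≤ s
      · simp [h]
      · simp [h, min_eq_left (le_of_not_ge h)]
    rw [hsplit]
    exact completedNatural_mono P _ hsr _
      ((measurableSet_hitTimes_le_inter_preimage hgood hε n s hC).union
        ((measurableSet_hitTimes_le hgood hε n s).compl.inter
          (measurable_completedNatural P _ le_rfl hC)))
  · have hcut : {ω | skeletonProcess B ε (min s (hitTimes B ε ω n)) ω ∈ C} ∩
        {ω | hitTimes B ε ω n ≤ r} =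
        {ω | hitTimes B ε ω n ≤ r} ∩ {ω | skeletonProcess B ε (hitTimes B ε ω n) ω ∈ C} := by
      ext ω
      by_cases h : hitTimes B ε ω n ≤ r
      · simp [h, min_eq_right (h.trans hrs.le)]
      · simp [h]
    rw [hcut]
    exact measurableSet_hitTimes_le_inter_preimage hgood hε n r hC

theorem completedNatural_le_map_comap_stopped (n : ℕ) (t : ℝ) :
    𝓕 t ≤ ((𝓖 n).comap ((↑) : {ω | hitTimes B ε ω n ≤ t ∧ t < hitTimes B ε ω (n + 1)} → Ω)).map
      (↑) := by
  have hnull : ∀ N, P N = 0 → MeasurableSet[𝓖 n] N := fun N =>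
    measurableSet_stoppedMeasurableSpace_of_null _
      (fun r _ => measurableSet_completedNatural_of_null P _ r)
  refine completedNatural_le P _ (fun s hst C hC => ?_) fun N hN =>
    MeasurableSpace.le_map_comap _ (hnull N hN)
  refine measurableSet_map_comap_of_ae_mem_iff hnull
    (measurableSet_stopped_preimage_min hgood hε n s hC) ?_
  filter_upwards [hgood] with ω hω hE
  simp [hω.skeletonProcess_min_hitTimes hε hst hE.2]

end SkeletonFiltration

section Gaussian

open Real
open scoped NNReal ENNReal

theorem gaussianReal_le_mul_volume (μ : ℝ) {v : ℝ≥0} (hv : v ≠ 0) (s : Set ℝ) :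
    gaussianReal μ v s ≤ ENNReal.ofReal (√(2 * π * v))⁻¹ * volume s := by
  rw [gaussianReal_apply μ hv, ← setLIntegral_const]
  refine lintegral_mono fun x => ENNReal.ofReal_le_ofReal ?_
  rw [gaussianPDFReal_def]
  exact mul_le_of_le_one_right (by positivity) (exp_le_one_iff.mpr
    (div_nonpos_of_nonpos_of_nonneg (neg_nonpos.mpr (sq_nonneg _)) (by positivity)))

theorem tendsto_ofReal_inv_sqrt_nat :
    Tendsto (fun m : ℕ => ENNReal.ofReal (√(2 * π * ((m : ℝ) + 1)))⁻¹) atTop (𝓝 0) := by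
  rw [← ENNReal.ofReal_zero]
  refine ENNReal.tendsto_ofReal (tendsto_inv_atTop_zero.comp (tendsto_sqrt_atTop.comp ?_))
  exact (tendsto_natCast_atTop_atTop.atTop_add tendsto_const_nhds).const_mul_atTop (by positivity)

end Gaussian

section BrownianMotion

open Real

variable {Ω : Type*} [MeasurableSpace Ω] {P : Measure Ω} {d : ℕ} {B : ℝ → Ω → (Fin d → ℝ)}

theorem IsBrownianMotion.map_coord_sub (hB : IsBrownianMotion P B) {s t : ℝ} (hs : 0 ≤ s)
    (hst : s ≤ t) (j : Fin d) :
    P.map (fun ω => (B t ω - B s ω) j) = gaussianReal 0 (t - s).toNNReal := by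
  have hsub : Measurable fun ω => B t ω - B s ω := (hB.measurable t).sub (hB.measurable s)
  rw [show (fun ω => (B t ω - B s ω) j) = Function.eval j ∘ fun ω => B t ω - B s ω from rfl,
    ← Measure.map_map (measurable_pi_apply j) hsub, hB.gaussian_increments s t hs hst]
  exact (measurePreserving_eval _ j).map_eq

theorem IsBrownianMotion.ae_exists_le_norm_sub (hB : IsBrownianMotion P B) (hd : 0 < d)
    (M : ℝ) : ∀ᵐ ω ∂P, ∃ s, 0 ≤ s ∧ M ≤ ‖B s ω - B 0 ω‖ := by
  let j : Fin d := ⟨0, hd⟩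
  rw [ae_iff]
  simp only [not_exists, not_and, not_le]
  have hbound : ∀ m : ℕ, P {ω | ∀ s, 0 ≤ s → ‖B s ω - B 0 ω‖ < M} ≤
      ENNReal.ofReal (√(2 * π * ((m : ℝ) + 1)))⁻¹ * volume (Icc (-M) M) := by
    intro m
    have hm : (0 : ℝ) ≤ m + 1 := by positivity
    calc P {ω | ∀ s, 0 ≤ s → ‖B s ω - B 0 ω‖ < M}
        ≤ P ((fun ω => (B (m + 1) ω - B 0 ω) j) ⁻¹' Icc (-M) M) := measure_mono fun ω hω =>
          abs_le.mp ((norm_le_pi_norm _ j).trans (hω _ hm).le)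
      _ = gaussianReal 0 ((m + 1 : ℝ) - 0).toNNReal (Icc (-M) M) := by
          have hmeas : Measurable fun ω => (B (m + 1) ω - B 0 ω) j :=
            (measurable_pi_apply j).comp ((hB.measurable _).sub (hB.measurable 0))
          rw [← Measure.map_apply hmeas measurableSet_Icc, hB.map_coord_sub le_rfl hm]
      _ ≤ _ := by
          have hv : ((m + 1 : ℝ) - 0).toNNReal ≠ 0 := by simp
          simpa [Real.coe_toNNReal _ hm] using gaussianReal_le_mul_volume 0 hv (Icc (-M) M)
  have hlim := ENNReal.Tendsto.mul_const tendsto_ofReal_inv_sqrt_nat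
    (Or.inr (measure_Icc_lt_top (μ := volume) (a := -M) (b := M)).ne)
  rw [zero_mul] at hlim
  exact le_zero_iff.mp (ge_of_tendsto' hlim hbound)

theorem IsBrownianMotion.ae_continuousUnboundedPath (hB : IsBrownianMotion P B) (hd : 0 < d) :
    ∀ᵐ ω ∂P, ContinuousUnboundedPath B ω := by
  filter_upwards [hB.cont, ae_all_iff.mpr fun M : ℕ => hB.ae_exists_le_norm_sub hd M]
    with ω hcont hunb using ⟨hcont, hunb⟩

end BrownianMotion

theorem skeleton_filtration_trace_eq_stopped_trace_general
    {Ω : Type*} [MeasurableSpace Ω] (P : Measure Ω)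
    {d : ℕ} (hd : 0 < d) (B : ℝ → Ω → (Fin d → ℝ)) (hB : IsBrownianMotion P B)
    (ε : ℝ) (hε : 0 < ε) (n : ℕ) (t : ℝ) :
    (fun S : Set Ω =>
        S ∩ {ω | hitTimes B ε ω n ≤ t ∧ t < hitTimes B ε ω (n + 1)}) ''
      {S | MeasurableSet[completedNatural P
          (fun r ω => fun i : Fin d => skeleton B ε i r ω) t] S}
    = (fun S : Set Ω =>
        S ∩ {ω | hitTimes B ε ω n ≤ t ∧ t < hitTimes B ε ω (n + 1)}) ''
      {S | ∀ r : ℝ, MeasurableSet[completedNatural P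
          (fun r' ω => fun i : Fin d => skeleton B ε i r' ω) r]
          (S ∩ {ω | hitTimes B ε ω n ≤ r})} := by
  have hgood := hB.ae_continuousUnboundedPath hd
  exact (image_inter_subset_of_le_map_comap
    (completedNatural_le_map_comap_stopped hgood hε n t)).antisymm
    (image_inter_stoppedMeasurableSpace_subset _ fun _ hω => hω.1)

/-- On the event `{T_n ≤ t < T_{n+1}}`, the trace of the σ-algebra `F^A_t` of the
completed natural filtration of the skeleton `A` coincides with the trace of the
stopped σ-algebra `F^A_{T_n} = {S | ∀ r, S ∩ {T_n ≤ r} ∈ F^A_r}`. -/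
theorem skeleton_filtration_trace_eq_stopped_trace
    {Ω : Type*} [MeasurableSpace Ω] (P : Measure Ω) [IsProbabilityMeasure P]
    {d : ℕ} (hd : 0 < d) (B : ℝ → Ω → (Fin d → ℝ)) (hB : IsBrownianMotion P B)
    (ε : ℝ) (hε : 0 < ε) (n : ℕ) (t : ℝ) :
    (fun S : Set Ω =>
        S ∩ {ω | hitTimes B ε ω n ≤ t ∧ t < hitTimes B ε ω (n + 1)}) ''
      {S | MeasurableSet[completedNatural P
          (fun r ω => fun i : Fin d => skeleton B ε i r ω) t] S}
    = (fun S : Set Ω =>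
        S ∩ {ω | hitTimes B ε ω n ≤ t ∧ t < hitTimes B ε ω (n + 1)}) ''
      {S | ∀ r : ℝ, MeasurableSet[completedNatural P
          (fun r' ω => fun i : Fin d => skeleton B ε i r' ω) r]
          (S ∩ {ω | hitTimes B ε ω n ≤ r})} :=
  skeleton_filtration_trace_eq_stopped_trace_general P hd B hB ε hε n t
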